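/- arXiv:2207.00976 — 7 statements merged into one kernel-verified Lean document; each statement's English description precedes it below -/
import Mathlib

section
/- Let μ0 and μ1 be probability densities on a measurable space X with respect to a dominating measure λ, with μ1(x) ≤ C·μ0(x) for some constant C > 0. Let (X_1, U_1), (X_2, U_2), ... be i.i.d. pairs with X_n ~ μ0 and U_n ~ Uniform[0,1] independent, and let X* ~ μ1 be independent of this sequence. Define K* as the first index n such that U_n ≤ μ1(X_n)/(C·μ0(X_n)), and let K be any stopping time with respect to the natural filtration of the sequence ((X_n, U_n)). Define Z = X_{K*} if K* ≤ K and Z = X* otherwise. Then Z is distributed according to μ1. -/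
open MeasureTheory ProbabilityTheory Classical
open Set Function

/-!
Write `E n` for the event that the first acceptance happens at step `n + 1` and `n + 1 ≤ K`.
It is the intersection of the event "steps `1, …, n` rejected and `K ≤ n` fails", which depends
only on the first `n` pairs because `K` is a stopping time, with the acceptance of the
`(n + 1)`-st pair. By independence, and since `P(U ≤ μ1(X)/(C μ0(X)), X ∈ t) = μ1(t)/C` for
`(X, U) ~ μ0 ⊗ Unif[0,1]`, we get `P(E n, Z ∈ t) = P(E n) μ1(t)`. The fallback event, the
complement of `⋃ E n`, is determined by the whole sequence and hence independent of `X* ~ μ1`,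
so `P(fallback, Z ∈ t) = P(fallback) μ1(t)`. Adding up gives `P(Z ∈ t) = μ1(t)`.
-/

section Acceptance

variable {𝒳 : Type*} [MeasurableSpace 𝒳]

theorem prod_restrict_Icc_setOf_le_inter_preimage_fst {ν : Measure 𝒳} {r : 𝒳 → ℝ}
    (hr : Measurable r) (hr1 : ∀ x, r x ≤ 1) {t : Set 𝒳} (ht : MeasurableSet t) :
    ν.prod (volume.restrict (Icc (0 : ℝ) 1)) ({p | p.2 ≤ r p.1} ∩ Prod.fst ⁻¹' t)
      = ∫⁻ x in t, ENNReal.ofReal (r x) ∂ν := by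
  have hmeas : MeasurableSet {p : 𝒳 × ℝ | p.2 ≤ r p.1} :=
    measurableSet_le measurable_snd (hr.comp measurable_fst)
  have hslice : ∀ x, volume.restrict (Icc (0 : ℝ) 1)
      (Prod.mk x ⁻¹' ({p : 𝒳 × ℝ | p.2 ≤ r p.1} ∩ Prod.fst ⁻¹' t))
        = t.indicator (fun x => ENNReal.ofReal (r x)) x := by
    intro x
    by_cases hx : x ∈ t
    · have hpre : Prod.mk x ⁻¹' ({p : 𝒳 × ℝ | p.2 ≤ r p.1} ∩ Prod.fst ⁻¹' t) = Iic (r x) := by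
        ext u
        simp [hx]
      have hIcc : Iic (r x) ∩ Icc 0 1 = Icc 0 (r x) := by
        ext u
        simp only [mem_inter_iff, mem_Iic, mem_Icc]
        constructor
        · rintro ⟨hu, hu0, -⟩
          exact ⟨hu0, hu⟩
        · rintro ⟨hu0, hu⟩
          exact ⟨hu, hu0, hu.trans (hr1 x)⟩
      rw [hpre, indicator_of_mem hx, Measure.restrict_apply measurableSet_Iic, hIcc,
        Real.volume_Icc, sub_zero]
    · have hpre : Prod.mk x ⁻¹' ({p : 𝒳 × ℝ | p.2 ≤ r p.1} ∩ Prod.fst ⁻¹' t) = ∅ := by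
        ext u
        simp [hx]
      rw [hpre, indicator_of_notMem hx, measure_empty]
  rw [Measure.prod_apply (hmeas.inter (measurable_fst ht)), lintegral_congr hslice,
    lintegral_indicator ht]

theorem setLIntegral_ofReal_div_withDensity {lam : Measure 𝒳} {μ0 μ1 : 𝒳 → ℝ}
    (hμ0 : Measurable μ0) (hμ1 : Measurable μ1) (hμ1nn : ∀ x, 0 ≤ μ1 x) {C : ℝ} (hC : 0 < C)
    (hdom : ∀ x, μ1 x ≤ C * μ0 x) {t : Set 𝒳} (ht : MeasurableSet t) :
    ∫⁻ x in t, ENNReal.ofReal (μ1 x / (C * μ0 x))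
        ∂lam.withDensity (fun x => ENNReal.ofReal (μ0 x))
      = ENNReal.ofReal C⁻¹ * lam.withDensity (fun x => ENNReal.ofReal (μ1 x)) t := by
  have hdensity : ∀ x, ENNReal.ofReal (μ0 x) * ENNReal.ofReal (μ1 x / (C * μ0 x))
      = ENNReal.ofReal C⁻¹ * ENNReal.ofReal (μ1 x) := by
    intro x
    have hμ0nn : 0 ≤ μ0 x := nonneg_of_mul_nonneg_right ((hμ1nn x).trans (hdom x)) hC
    rw [← ENNReal.ofReal_mul hμ0nn, ← ENNReal.ofReal_mul (inv_nonneg.2 hC.le)]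
    congr 1
    rcases hμ0nn.eq_or_lt with h0 | hpos
    · have hμ1 : μ1 x = 0 := le_antisymm (by simpa [← h0] using hdom x) (hμ1nn x)
      simp [← h0, hμ1]
    · field_simp
  have hratio : Measurable fun x => μ1 x / (C * μ0 x) := by fun_prop
  rw [setLIntegral_withDensity_eq_setLIntegral_mul _ hμ0.ennreal_ofReal hratio.ennreal_ofReal ht]
  simp only [Pi.mul_apply, hdensity]
  rw [lintegral_const_mul _ hμ1.ennreal_ofReal, withDensity_apply _ ht]

end Acceptance

section HybridRejection

variable {Ω β : Type*} {Y : ℕ → Ω → β} {A : Set β} {K : Ω → ℕ}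

/-- The first index `n ≥ 1` with `Y n ∈ A`, and `0` (as `sInf ∅ = 0`) if there is none. -/
noncomputable def firstHit (Y : ℕ → Ω → β) (A : Set β) (ω : Ω) : ℕ :=
  sInf {n | 1 ≤ n ∧ Y n ω ∈ A}

def stillRunning (Y : ℕ → Ω → β) (A : Set β) (K : Ω → ℕ) (n : ℕ) : Set Ω :=
  (⋂ i ∈ Finset.Icc 1 n, (Y i ⁻¹' A)ᶜ) ∩ {ω | K ω ≤ n}ᶜ

noncomputable def hybridSample {𝒳 : Type*} (Y : ℕ → Ω → β) (A : Set β) (K : Ω → ℕ)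
    (g : β → 𝒳) (Xstar : Ω → 𝒳) (ω : Ω) : 𝒳 :=
  if 1 ≤ firstHit Y A ω ∧ firstHit Y A ω ≤ K ω then g (Y (firstHit Y A ω) ω) else Xstar ω

theorem firstHit_eq_succ_iff {ω : Ω} {n : ℕ} :
    firstHit Y A ω = n + 1 ↔ Y (n + 1) ω ∈ A ∧ ∀ i ∈ Finset.Icc 1 n, Y i ω ∉ A := by
  constructor
  · intro h
    have hmem := Nat.sInf_mem (Nat.nonempty_of_sInf_eq_succ h)
    rw [← firstHit, h] at hmem
    refine ⟨hmem.2, fun i hi hiA => ?_⟩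
    have hle : firstHit Y A ω ≤ i := Nat.sInf_le ⟨(Finset.mem_Icc.1 hi).1, hiA⟩
    have hin := (Finset.mem_Icc.1 hi).2
    omega
  · rintro ⟨hA, hbefore⟩
    refine le_antisymm (Nat.sInf_le ⟨Nat.le_add_left 1 n, hA⟩)
      (le_csInf ⟨n + 1, Nat.le_add_left 1 n, hA⟩ fun m hm => ?_)
    by_contra! hlt
    exact hbefore m (Finset.mem_Icc.2 ⟨hm.1, by omega⟩) hm.2

theorem setOf_firstHit_eq_succ_and_le (n : ℕ) :
    {ω | firstHit Y A ω = n + 1 ∧ n + 1 ≤ K ω} = stillRunning Y A K n ∩ Y (n + 1) ⁻¹' A := by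
  ext ω
  simp only [mem_ofPred_eq, firstHit_eq_succ_iff, stillRunning, mem_inter_iff, mem_iInter,
    mem_compl_iff, mem_preimage, not_le, Nat.lt_iff_add_one_le]
  tauto

theorem setOf_one_le_firstHit_le_eq_iUnion :
    {ω | 1 ≤ firstHit Y A ω ∧ firstHit Y A ω ≤ K ω}
      = ⋃ n, {ω | firstHit Y A ω = n + 1 ∧ n + 1 ≤ K ω} := by
  ext ω
  simp only [mem_ofPred_eq, mem_iUnion]
  constructor
  · rintro ⟨h1, hK⟩
    exact ⟨firstHit Y A ω - 1, by omega, by omega⟩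
  · rintro ⟨n, hn, hK⟩
    omega

theorem pairwise_disjoint_setOf_firstHit_eq_succ :
    Pairwise (Disjoint on fun n => {ω | firstHit Y A ω = n + 1 ∧ n + 1 ≤ K ω}) := by
  intro m n hmn
  refine Set.disjoint_left.2 fun ω hm hn => hmn ?_
  have hmn' := hm.1.symm.trans hn.1
  omega

variable [MeasurableSpace β]

abbrev sigmaUpTo (Y : ℕ → Ω → β) (n : ℕ) : MeasurableSpace Ω :=
  ⨆ i ∈ Finset.Icc 1 n, MeasurableSpace.comap (Y i) inferInstance

theorem comap_le_sigmaUpTo {i n : ℕ} (hi : i ∈ Finset.Icc 1 n) :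
    MeasurableSpace.comap (Y i) inferInstance ≤ sigmaUpTo Y n :=
  le_iSup₂ (f := fun i _ => MeasurableSpace.comap (Y i) inferInstance) i hi

theorem sigmaUpTo_le {m : MeasurableSpace Ω} (hY : ∀ i, Measurable[m] (Y i)) (n : ℕ) :
    sigmaUpTo Y n ≤ m :=
  iSup₂_le fun i _ => (hY i).comap_le

theorem measurableSet_stillRunning (hA : MeasurableSet A)
    (hK : ∀ n, MeasurableSet[sigmaUpTo Y n] {ω | K ω ≤ n}) (n : ℕ) :
    MeasurableSet[sigmaUpTo Y n] (stillRunning Y A K n) :=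
  (MeasurableSet.biInter (Finset.Icc 1 n).countable_toSet fun _ hi =>
    (comap_le_sigmaUpTo hi _ ⟨A, hA, rfl⟩).compl).inter (hK n).compl

theorem measurableSet_firstHit_eq_succ_and_le {m : MeasurableSpace Ω}
    (hY : ∀ i, Measurable[m] (Y i)) (hA : MeasurableSet A)
    (hK : ∀ n, MeasurableSet[sigmaUpTo Y n] {ω | K ω ≤ n}) (n : ℕ) :
    MeasurableSet[m] {ω | firstHit Y A ω = n + 1 ∧ n + 1 ≤ K ω} := by
  rw [setOf_firstHit_eq_succ_and_le]
  exact (sigmaUpTo_le hY n _ (measurableSet_stillRunning hA hK n)).inter (hY (n + 1) hA)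

theorem measurableSet_setOf_one_le_firstHit_le {m : MeasurableSpace Ω}
    (hY : ∀ i, Measurable[m] (Y i)) (hA : MeasurableSet A)
    (hK : ∀ n, MeasurableSet[sigmaUpTo Y n] {ω | K ω ≤ n}) :
    MeasurableSet[m] {ω | 1 ≤ firstHit Y A ω ∧ firstHit Y A ω ≤ K ω} := by
  rw [setOf_one_le_firstHit_le_eq_iUnion]
  exact MeasurableSet.iUnion (measurableSet_firstHit_eq_succ_and_le hY hA hK)

variable [MeasurableSpace Ω] {P : Measure Ω} {𝒳 : Type*} [MeasurableSpace 𝒳]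

theorem indep_sigmaUpTo_comap_succ (hY : ∀ n, Measurable (Y n)) (hind : iIndepFun Y P)
    (n : ℕ) : Indep (sigmaUpTo Y n) (MeasurableSpace.comap (Y (n + 1)) inferInstance) P := by
  have hdisj : Disjoint {i | i ∈ Finset.Icc 1 n} ({n + 1} : Set ℕ) := by
    simp
  have h := indep_iSup_of_disjoint (fun i => (hY i).comap_le)
    ((iIndepFun_iff_iIndep _ _ _).1 hind) hdisj
  rwa [iSup_singleton] at h

theorem measure_setOf_firstHit_eq_succ_inter_preimage (hY : ∀ n, Measurable (Y n))
    (hind : iIndepFun Y P) (hA : MeasurableSet A)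
    (hK : ∀ n, MeasurableSet[sigmaUpTo Y n] {ω | K ω ≤ n}) {g : β → 𝒳} (hg : Measurable g)
    {ν : Measure 𝒳} (hacc : ∀ n t, MeasurableSet t →
      P (Y n ⁻¹' (A ∩ g ⁻¹' t)) = P (Y n ⁻¹' A) * ν t)
    (n : ℕ) {t : Set 𝒳} (ht : MeasurableSet t) :
    P ({ω | firstHit Y A ω = n + 1 ∧ n + 1 ≤ K ω} ∩ Y (n + 1) ⁻¹' (g ⁻¹' t))
      = P {ω | firstHit Y A ω = n + 1 ∧ n + 1 ≤ K ω} * ν t := by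
  have hindep : ∀ s, MeasurableSet[MeasurableSpace.comap (Y (n + 1)) inferInstance] s →
      P (stillRunning Y A K n ∩ s) = P (stillRunning Y A K n) * P s := fun s hs =>
    (Indep_iff _ _ _).1 (indep_sigmaUpTo_comap_succ hY hind n) _ _
      (measurableSet_stillRunning hA hK n) hs
  rw [setOf_firstHit_eq_succ_and_le, inter_assoc, ← preimage_inter,
    hindep _ ⟨_, hA.inter (hg ht), rfl⟩, hacc _ _ ht, hindep _ ⟨A, hA, rfl⟩, mul_assoc]

theorem map_hybridSample [IsProbabilityMeasure P] (hY : ∀ n, Measurable (Y n))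
    (hind : iIndepFun Y P) (hA : MeasurableSet A)
    (hK : ∀ n, MeasurableSet[sigmaUpTo Y n] {ω | K ω ≤ n}) {g : β → 𝒳} (hg : Measurable g)
    {ν : Measure 𝒳} (hacc : ∀ n t, MeasurableSet t →
      P (Y n ⁻¹' (A ∩ g ⁻¹' t)) = P (Y n ⁻¹' A) * ν t)
    {Xstar : Ω → 𝒳} (hXstar : Measurable Xstar) (hlawstar : P.map Xstar = ν)
    (hindep : IndepFun Xstar (fun ω n => Y n ω) P) :
    P.map (hybridSample Y A K g Xstar) = ν := by
  set Z := hybridSample Y A K g Xstar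
  set E : ℕ → Set Ω := fun n => {ω | firstHit Y A ω = n + 1 ∧ n + 1 ≤ K ω}
  set G := {ω | 1 ≤ firstHit Y A ω ∧ firstHit Y A ω ≤ K ω}
  have hE : ∀ n, MeasurableSet (E n) := measurableSet_firstHit_eq_succ_and_le hY hA hK
  have hG : MeasurableSet G := measurableSet_setOf_one_le_firstHit_le hY hA hK
  have hGE : G = ⋃ n, E n := setOf_one_le_firstHit_le_eq_iUnion
  have hdisj : Pairwise (Disjoint on E) := pairwise_disjoint_setOf_firstHit_eq_succ
  have hZ_acc : ∀ t, Z ⁻¹' t ∩ G = ⋃ n, E n ∩ Y (n + 1) ⁻¹' (g ⁻¹' t) := by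
    intro t
    rw [hGE, inter_iUnion]
    refine iUnion_congr fun n => ?_
    ext ω
    refine and_comm.trans (and_congr_right fun ⟨hn, hKn⟩ => ?_)
    simp [Z, hybridSample, hn, hKn]
  have hZ_rej : ∀ t, Z ⁻¹' t ∩ Gᶜ = Gᶜ ∩ Xstar ⁻¹' t := by
    intro t
    ext ω
    refine and_comm.trans (and_congr_right fun hω => ?_)
    rw [mem_preimage, mem_preimage, show Z ω = Xstar ω from if_neg hω]
  have hZ : Measurable Z := fun t ht => by
    rw [← inter_union_compl (Z ⁻¹' t) G, hZ_acc, hZ_rej]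
    exact (MeasurableSet.iUnion fun n => (hE n).inter (hY (n + 1) (hg ht))).union
      (hG.compl.inter (hXstar ht))
  have hP_acc : ∀ t, MeasurableSet t → P (⋃ n, E n ∩ Y (n + 1) ⁻¹' (g ⁻¹' t)) = P G * ν t := by
    intro t ht
    rw [measure_iUnion (fun m n hmn => (hdisj hmn).mono inter_subset_left inter_subset_left)
        fun n => (hE n).inter (hY (n + 1) (hg ht)),
      tsum_congr fun n => measure_setOf_firstHit_eq_succ_inter_preimage hY hind hA hK hg hacc n ht,
      ENNReal.tsum_mul_right, ← measure_iUnion hdisj hE, ← hGE]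
  have hP_rej : ∀ t, MeasurableSet t → P (Gᶜ ∩ Xstar ⁻¹' t) = P Gᶜ * ν t := by
    intro t ht
    obtain ⟨T, hT, hTG⟩ :
        MeasurableSet[MeasurableSpace.comap (fun ω n => Y n ω) inferInstance] Gᶜ :=
      (measurableSet_setOf_one_le_firstHit_le
        (fun i => (measurable_pi_apply i).comp (comap_measurable _)) hA hK).compl
    rw [← hTG, inter_comm, hindep.measure_inter_preimage_eq_mul _ _ ht hT,
      ← Measure.map_apply hXstar ht, hlawstar, mul_comm]
  refine Measure.ext fun t ht => ?_
  calc P.map Z t = P (Z ⁻¹' t ∩ G) + P (Z ⁻¹' t ∩ Gᶜ) := by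
        rw [Measure.map_apply hZ ht, ← measure_inter_add_sdiff _ hG, Set.sdiff_eq]
    _ = P G * ν t + P Gᶜ * ν t := by rw [hZ_acc, hZ_rej, hP_acc t ht, hP_rej t ht]
    _ = ν t := by rw [← add_mul, measure_add_measure_compl hG, measure_univ, one_mul]

end HybridRejection

theorem stmt_0_general {Ω 𝒳 : Type*} [MeasurableSpace Ω] [MeasurableSpace 𝒳]
    (P : Measure Ω) [IsProbabilityMeasure P]
    (lam : Measure 𝒳)
    (μ0 μ1 : 𝒳 → ℝ) (hμ0meas : Measurable μ0) (hμ1meas : Measurable μ1)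
    (hμ1nn : ∀ x, 0 ≤ μ1 x)
    (hμ1prob : IsProbabilityMeasure
      (lam.withDensity fun x => ENNReal.ofReal (μ1 x)))
    (C : ℝ) (hC : 0 < C) (hdom : ∀ x, μ1 x ≤ C * μ0 x)
    (X : ℕ → Ω → 𝒳) (U : ℕ → Ω → ℝ) (Xstar : Ω → 𝒳)
    (hXmeas : ∀ n, Measurable (X n)) (hUmeas : ∀ n, Measurable (U n))
    (hXstarmeas : Measurable Xstar)
    -- the pairs `(X_n, U_n)` are i.i.d. with law `μ0 ⊗ Unif[0,1]`
    (hiid : iIndepFun (fun n ω => (X n ω, U n ω)) P)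
    (hlaw : ∀ n, Measure.map (fun ω => (X n ω, U n ω)) P =
      (lam.withDensity fun x => ENNReal.ofReal (μ0 x)).prod
        (volume.restrict (Set.Icc (0:ℝ) 1)))
    -- `X*` is distributed according to `μ1` and independent of the sequence
    (hlawstar : Measure.map Xstar P =
      lam.withDensity fun x => ENNReal.ofReal (μ1 x))
    (hindepstar : IndepFun Xstar (fun ω => fun n : ℕ => (X n ω, U n ω)) P)
    -- `K` is a stopping time for the natural filtration of the sequence
    (K : Ω → ℕ)
    (hstop : ∀ n : ℕ, MeasurableSet[⨆ i ∈ Finset.Icc 1 n,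
        MeasurableSpace.comap (fun ω => (X i ω, U i ω)) inferInstance]
      {ω | K ω ≤ n})
    -- `K*` is the first accepted index
    (Kstar : Ω → ℕ)
    (hKstar : ∀ ω, Kstar ω =
      sInf {n : ℕ | 1 ≤ n ∧ U n ω ≤ μ1 (X n ω) / (C * μ0 (X n ω))})
    (Z : Ω → 𝒳)
    (hZ : ∀ ω, Z ω =
      if 1 ≤ Kstar ω ∧ Kstar ω ≤ K ω then X (Kstar ω) ω else Xstar ω) :
    Measure.map Z P = lam.withDensity fun x => ENNReal.ofReal (μ1 x) := by
  set Y : ℕ → Ω → 𝒳 × ℝ := fun n ω => (X n ω, U n ω)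
  set A : Set (𝒳 × ℝ) := {p | p.2 ≤ μ1 p.1 / (C * μ0 p.1)}
  have hratio : Measurable fun x => μ1 x / (C * μ0 x) := by fun_prop
  have hA : MeasurableSet A := measurableSet_le measurable_snd (hratio.comp measurable_fst)
  have hY : ∀ n, Measurable (Y n) := fun n => (hXmeas n).prodMk (hUmeas n)
  have hP_acc : ∀ n t, MeasurableSet t → P (Y n ⁻¹' (A ∩ Prod.fst ⁻¹' t))
      = ENNReal.ofReal C⁻¹ * lam.withDensity (fun x => ENNReal.ofReal (μ1 x)) t := by
    intro n t ht
    rw [← Measure.map_apply (hY n) (hA.inter (measurable_fst ht)), hlaw n,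
      prod_restrict_Icc_setOf_le_inter_preimage_fst hratio
        (fun x => div_le_one_of_le₀ (hdom x) ((hμ1nn x).trans (hdom x))) ht,
      setLIntegral_ofReal_div_withDensity hμ0meas hμ1meas hμ1nn hC hdom ht]
  have hZ_eq : Z = hybridSample Y A K Prod.fst Xstar := funext fun ω => by
    rw [hZ, hKstar]
    rfl
  rw [hZ_eq]
  refine map_hybridSample hY hiid hA hstop measurable_fst (fun n t ht => ?_) hXstarmeas
    hlawstar hindepstar
  have hP_A := hP_acc n univ MeasurableSet.univ
  rw [preimage_univ, inter_univ, measure_univ, mul_one] at hP_A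
  rw [hP_acc n t ht, hP_A]

/-- Validity of hybrid rejection sampling.  Let `μ0, μ1` be probability
densities w.r.t. a dominating measure `lam` with `μ1 ≤ C·μ0`.  Let
`(X_n, U_n)`, `n = 1, 2, ...` be i.i.d. with `X_n ~ μ0` and `U_n ~ Unif[0,1]`
independent, and let `X* ~ μ1` be independent of the sequence.  Let `K*` be
the first index `n ≥ 1` with `U_n ≤ μ1(X_n)/(C·μ0(X_n))`, and let `K` be any
stopping time w.r.t. the natural filtration of `((X_n, U_n))_{n≥1}`.  Then
`Z := X_{K*}` if `K* ≤ K` (with `K*` finite), else `Z := X*`, is distributed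
according to `μ1`. -/
theorem stmt_0 {Ω 𝒳 : Type*} [MeasurableSpace Ω] [MeasurableSpace 𝒳]
    (P : Measure Ω) [IsProbabilityMeasure P]
    (lam : Measure 𝒳) [SigmaFinite lam]
    (μ0 μ1 : 𝒳 → ℝ) (hμ0meas : Measurable μ0) (hμ1meas : Measurable μ1)
    (hμ0nn : ∀ x, 0 ≤ μ0 x) (hμ1nn : ∀ x, 0 ≤ μ1 x)
    (hμ0prob : IsProbabilityMeasure
      (lam.withDensity fun x => ENNReal.ofReal (μ0 x)))
    (hμ1prob : IsProbabilityMeasure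
      (lam.withDensity fun x => ENNReal.ofReal (μ1 x)))
    (C : ℝ) (hC : 0 < C) (hdom : ∀ x, μ1 x ≤ C * μ0 x)
    (X : ℕ → Ω → 𝒳) (U : ℕ → Ω → ℝ) (Xstar : Ω → 𝒳)
    (hXmeas : ∀ n, Measurable (X n)) (hUmeas : ∀ n, Measurable (U n))
    (hXstarmeas : Measurable Xstar)
    -- the pairs `(X_n, U_n)` are i.i.d. with law `μ0 ⊗ Unif[0,1]`
    (hiid : iIndepFun (fun n ω => (X n ω, U n ω)) P)
    (hlaw : ∀ n, Measure.map (fun ω => (X n ω, U n ω)) P =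
      (lam.withDensity fun x => ENNReal.ofReal (μ0 x)).prod
        (volume.restrict (Set.Icc (0:ℝ) 1)))
    -- `X*` is distributed according to `μ1` and independent of the sequence
    (hlawstar : Measure.map Xstar P =
      lam.withDensity fun x => ENNReal.ofReal (μ1 x))
    (hindepstar : IndepFun Xstar (fun ω => fun n : ℕ => (X n ω, U n ω)) P)
    -- `K` is a stopping time for the natural filtration of the sequence
    (K : Ω → ℕ)
    (hstop : ∀ n : ℕ, MeasurableSet[⨆ i ∈ Finset.Icc 1 n,
        MeasurableSpace.comap (fun ω => (X i ω, U i ω)) inferInstance]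
      {ω | K ω ≤ n})
    -- `K*` is the first accepted index
    (Kstar : Ω → ℕ)
    (hKstar : ∀ ω, Kstar ω =
      sInf {n : ℕ | 1 ≤ n ∧ U n ω ≤ μ1 (X n ω) / (C * μ0 (X n ω))})
    (Z : Ω → 𝒳)
    (hZ : ∀ ω, Z ω =
      if 1 ≤ Kstar ω ∧ Kstar ω ≤ K ω then X (Kstar ω) ω else Xstar ω) :
    Measure.map Z P = lam.withDensity fun x => ENNReal.ofReal (μ1 x) :=
  stmt_0_general P lam μ0 μ1 hμ0meas hμ1meas hμ1nn hμ1prob C hC hdom X U Xstar hXmeas hUmeas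
    hXstarmeas hiid hlaw hlawstar hindepstar K hstop Kstar hKstar Z hZ
end

section
/- Let L be a random variable taking values in (0,1], and let X be a random variable such that conditionally on L, X follows a geometric distribution with success parameter L (supported on {1,2,3,...} with P(X=n|L) = L(1-L)^{n-1}). Then for any real k > 0, E[X^k] = ∞ if and only if E[L^{-k}] = ∞. -/
/-!
Given `L = l`, the `k`-th moment of `X ~ Geo(l)` is comparable to `l^{-k}`, uniformly in
`l ∈ (0,1]`, since the mass of `X` sits at `X ≈ 1/l`. From above, `(1-l)^n ≤ e^{-ln}` and
`x^k e^{-ax} ≤ (k/(ea))^k` reduce the series to a geometric one with sum `O(1/l)`. From below,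
with `N = ⌊1/(2l)⌋`, `X > N ≥ 1/(2l) - 1` holds with probability `(1-l)^N ≥ 1 - Nl ≥ 1/2`
(Bernoulli). So `E[X^k] = E[E[X^k | L]]` and `E[L^{-k}]` are finite together.
-/

open MeasureTheory Real
open scoped ENNReal

lemma Real.rpow_mul_exp_neg_mul_le {k a x : ℝ} (hk : 0 < k) (ha : 0 < a) (hx : 0 ≤ x) :
    x ^ k * exp (-(a * x)) ≤ (k / (exp 1 * a)) ^ k := by
  have hbase : x * exp (-(a * x / k)) ≤ k / (exp 1 * a) := by
    have h := add_one_le_exp (a * x / k - 1)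
    rw [exp_sub, sub_add_cancel, le_div_iff₀ (exp_pos 1)] at h
    rw [le_div_iff₀ (by positivity), exp_neg]
    calc x * (exp (a * x / k))⁻¹ * (exp 1 * a) = k * (a * x / k * exp 1) / exp (a * x / k) := by
          field_simp
      _ ≤ k := by rw [div_le_iff₀ (exp_pos _)]; gcongr
  calc x ^ k * exp (-(a * x)) = (x * exp (-(a * x / k))) ^ k := by
        rw [mul_rpow hx (exp_pos _).le, ← exp_mul]
        congr 2
        field_simp
    _ ≤ (k / (exp 1 * a)) ^ k := rpow_le_rpow (by positivity) hbase hk.le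

-- `E[X^k]` for `X ~ Geo(l)`, summed over `n = X - 1`.
noncomputable def geomMoment (k l : ℝ) : ℝ≥0∞ :=
  ∑' n : ℕ, ENNReal.ofReal ((n + 1 : ℝ) ^ k * (l * (1 - l) ^ n))

lemma geomMoment_le {k l : ℝ} (hk : 0 < k) (hl₀ : 0 < l) (hl₁ : l ≤ 1) :
    geomMoment k l ≤ ENNReal.ofReal (2 * exp 1 * (2 * k / exp 1) ^ k * l ^ (-k)) := by
  set r := exp (-(l / 2)) with hr
  set M := (k / (exp 1 * (l / 2))) ^ k with hM
  have hr₀ : 0 ≤ r := (exp_pos _).le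
  have hr₁ : r < 1 := exp_lt_one_iff.mpr (by linarith)
  have hterm (n : ℕ) : (n + 1 : ℝ) ^ k * (l * (1 - l) ^ n) ≤ l * exp (l / 2) * M * r ^ n := by
    have hpow : (1 - l) ^ n ≤ exp (-(l / 2 * (n + 1))) * (exp (l / 2) * r ^ n) := by
      calc (1 - l) ^ n ≤ exp (-l) ^ n :=
            pow_le_pow_left₀ (by linarith) (by linarith [add_one_le_exp (-l)]) n
        _ = exp (-(l / 2 * (n + 1))) * (exp (l / 2) * r ^ n) := by
            rw [hr, ← exp_nat_mul, ← exp_nat_mul, ← exp_add, ← exp_add]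
            ring_nf
    have hmax := rpow_mul_exp_neg_mul_le hk (half_pos hl₀) n.cast_add_one_pos.le
    calc (n + 1 : ℝ) ^ k * (l * (1 - l) ^ n)
        ≤ (n + 1 : ℝ) ^ k * (l * (exp (-(l / 2 * (n + 1))) * (exp (l / 2) * r ^ n))) := by
          gcongr
      _ = l * exp (l / 2) * ((n + 1 : ℝ) ^ k * exp (-(l / 2 * (n + 1)))) * r ^ n := by ring
      _ ≤ l * exp (l / 2) * M * r ^ n := by gcongr
  -- `1 - e^{-x} ≥ x e^{-x}` with `x = l / 2`
  have hgeom : (1 - r)⁻¹ ≤ 2 * exp (l / 2) / l := by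
    have h := add_one_le_exp (l / 2)
    rw [← inv_div, inv_le_inv₀ (by linarith) (by positivity), hr, exp_neg]
    field_simp
    linarith
  calc geomMoment k l ≤ ∑' n : ℕ, ENNReal.ofReal (l * exp (l / 2) * M * r ^ n) :=
        ENNReal.tsum_le_tsum fun n => ENNReal.ofReal_le_ofReal (hterm n)
    _ = ENNReal.ofReal (l * exp (l / 2) * M * (1 - r)⁻¹) := by
        rw [← ENNReal.ofReal_tsum_of_nonneg (fun n => by positivity)
          ((summable_geometric_of_lt_one hr₀ hr₁).mul_left _), tsum_mul_left,
          tsum_geometric_of_lt_one hr₀ hr₁]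
    _ ≤ ENNReal.ofReal (2 * exp 1 * (2 * k / exp 1) ^ k * l ^ (-k)) := by
        refine ENNReal.ofReal_le_ofReal ?_
        have hM' : M = (2 * k / exp 1) ^ k * l ^ (-k) := by
          rw [hM, rpow_neg hl₀.le, ← inv_rpow hl₀.le,
            ← mul_rpow (by positivity) (by positivity)]
          congr 1
          field_simp
        calc l * exp (l / 2) * M * (1 - r)⁻¹
            ≤ l * exp (l / 2) * M * (2 * exp (l / 2) / l) := by gcongr
          _ = 2 * (exp (l / 2) * exp (l / 2)) * M := by
              field_simp
          _ ≤ 2 * exp 1 * (2 * k / exp 1) ^ k * l ^ (-k) := by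
              rw [← exp_add, add_halves, hM', ← mul_assoc]
              gcongr

lemma le_geomMoment {k l : ℝ} (hk : 0 < k) (hl₀ : 0 < l) (hl₁ : l ≤ 1) :
    ENNReal.ofReal (2 ^ (-k) / 2 * l ^ (-k)) ≤ geomMoment k l := by
  set N := ⌊(2 * l)⁻¹⌋₊
  have hNl : N * l ≤ 1 / 2 :=
    calc N * l ≤ (2 * l)⁻¹ * l := by gcongr; exact Nat.floor_le (by positivity)
      _ = 1 / 2 := by field_simp
  have htail : 1 / 2 ≤ (1 - l) ^ N := by
    have := one_add_mul_le_pow (show (-2 : ℝ) ≤ -l by linarith) N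
    rw [← sub_eq_add_neg] at this
    linarith
  have hN : (2 * l) ^ (-k) ≤ (N + 1 : ℝ) ^ k := by
    rw [rpow_neg (by positivity), ← inv_rpow (by positivity)]
    exact rpow_le_rpow (by positivity) (Nat.lt_floor_add_one _).le hk.le
  have hsum : ∑' n : ℕ, ENNReal.ofReal (l * (1 - l) ^ n) = 1 := by
    rw [← ENNReal.ofReal_tsum_of_nonneg (fun n => by positivity)
      ((summable_geometric_of_lt_one (by linarith) (by linarith)).mul_left _), tsum_mul_left,
      tsum_geometric_of_lt_one (by linarith) (by linarith), sub_sub_cancel,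
      mul_inv_cancel₀ hl₀.ne', ENNReal.ofReal_one]
  calc ENNReal.ofReal (2 ^ (-k) / 2 * l ^ (-k))
      ≤ ENNReal.ofReal ((N + 1 : ℝ) ^ k * (1 - l) ^ N) := by
        refine ENNReal.ofReal_le_ofReal ?_
        rw [div_mul_eq_mul_div, ← mul_rpow (by norm_num) hl₀.le, div_eq_mul_one_div]
        gcongr
    _ = ∑' n : ℕ,
          ENNReal.ofReal ((N + 1 : ℝ) ^ k * (1 - l) ^ N) * ENNReal.ofReal (l * (1 - l) ^ n) := by
        rw [ENNReal.tsum_mul_left, hsum, mul_one]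
    _ ≤ ∑' n : ℕ,
          ENNReal.ofReal (((n + N : ℕ) + 1 : ℝ) ^ k * (l * (1 - l) ^ (n + N))) := by
        gcongr with n
        rw [← ENNReal.ofReal_mul (by positivity)]
        refine ENNReal.ofReal_le_ofReal ?_
        calc (N + 1 : ℝ) ^ k * (1 - l) ^ N * (l * (1 - l) ^ n)
            = (N + 1 : ℝ) ^ k * (l * (1 - l) ^ (n + N)) := by ring
          _ ≤ ((n + N : ℕ) + 1 : ℝ) ^ k * (l * (1 - l) ^ (n + N)) := by
            gcongr
            linarith [n.cast_nonneg (α := ℝ)]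
    _ ≤ geomMoment k l :=
        ENNReal.tsum_comp_le_tsum_of_injective (add_left_injective N) _

lemma MeasureTheory.lintegral_eq_top_iff_of_le_of_le {α : Type*} [MeasurableSpace α]
    {μ : Measure α} {f g : α → ℝ≥0∞} {c C : ℝ≥0∞} (hc : c ≠ 0) (hC : C ≠ ∞)
    (hcgf : ∀ a, c * g a ≤ f a) (hfCg : ∀ a, f a ≤ C * g a) :
    ∫⁻ a, f a ∂μ = ∞ ↔ ∫⁻ a, g a ∂μ = ∞ := by
  constructor
  · intro hf
    by_contra hg
    have hle : ∫⁻ a, f a ∂μ ≤ C * ∫⁻ a, g a ∂μ :=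
      (lintegral_mono hfCg).trans_eq (lintegral_const_mul' C g hC)
    exact ENNReal.mul_ne_top hC hg (top_le_iff.mp (hf ▸ hle))
  · intro hg
    have hle : c * ∫⁻ a, g a ∂μ ≤ ∫⁻ a, f a ∂μ :=
      (lintegral_const_mul_le c g).trans (lintegral_mono hcgf)
    rwa [hg, ENNReal.mul_top hc, top_le_iff] at hle

lemma MeasureTheory.lintegral_comp_eq_tsum {Ω : Type*} [MeasurableSpace Ω] {μ : Measure Ω}
    {X : Ω → ℕ} (hX : Measurable X) (f : ℕ → ℝ≥0∞) :
    ∫⁻ ω, f (X ω) ∂μ = ∑' n, f n * μ (X ⁻¹' {n}) := by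
  rw [← lintegral_map measurable_from_nat hX, lintegral_countable']
  simp only [Measure.map_apply hX (measurableSet_singleton _)]

lemma MeasureTheory.measure_eq_lintegral_of_condExp_indicator_ae_eq {Ω : Type*}
    {m m0 : MeasurableSpace Ω} {μ : Measure Ω} [IsFiniteMeasure μ] (hm : m ≤ m0) {s : Set Ω}
    (hs : MeasurableSet s) {f : Ω → ℝ} (hf : μ[s.indicator 1 | m] =ᵐ[μ] f) :
    μ s = ∫⁻ ω, ENNReal.ofReal (f ω) ∂μ := by
  have hf_int : Integrable f μ := integrable_condExp.congr hf
  have hcond_nonneg : 0 ≤ᵐ[μ] μ[s.indicator (1 : Ω → ℝ) | m] :=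
    condExp_nonneg (ae_of_all _ (Set.indicator_nonneg fun _ _ => zero_le_one))
  have hf_nonneg : 0 ≤ᵐ[μ] f := by
    filter_upwards [hcond_nonneg, hf] with ω h h'
    exact h' ▸ h
  rw [← ofReal_integral_eq_lintegral_ofReal hf_int hf_nonneg, ← integral_congr_ae hf,
    integral_condExp hm, integral_indicator_one hs, ofReal_measureReal]

lemma lintegral_rpow_eq_lintegral_geomMoment {Ω : Type*} {m0 : MeasurableSpace Ω}
    {P : Measure Ω} [IsFiniteMeasure P] {L : Ω → ℝ} (hL : Measurable L) {X : Ω → ℕ}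
    (hX : Measurable X)
    (hgeo : ∀ n : ℕ, 1 ≤ n →
      (P[(fun ω => if X ω = n then (1:ℝ) else 0) | MeasurableSpace.comap L inferInstance])
        =ᵐ[P] fun ω => L ω * (1 - L ω) ^ (n - 1))
    {k : ℝ} (hk : 0 < k) :
    ∫⁻ ω, ENNReal.ofReal ((X ω : ℝ) ^ k) ∂P = ∫⁻ ω, geomMoment k (L ω) ∂P := by
  have hprob (n : ℕ) :
      P (X ⁻¹' {n + 1}) = ∫⁻ ω, ENNReal.ofReal (L ω * (1 - L ω) ^ n) ∂P := by
    refine measure_eq_lintegral_of_condExp_indicator_ae_eq hL.comap_le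
      (hX (measurableSet_singleton _)) ?_
    have hind :
        (X ⁻¹' {n + 1}).indicator 1 = fun ω => if X ω = n + 1 then (1 : ℝ) else 0 := by
      ext ω
      by_cases h : X ω = n + 1 <;> simp [h]
    rw [hind]
    simpa using hgeo (n + 1) le_add_self
  rw [lintegral_comp_eq_tsum hX (fun n => ENNReal.ofReal ((n : ℝ) ^ k)),
    tsum_eq_zero_add' ENNReal.summable]
  unfold geomMoment
  rw [lintegral_tsum (by fun_prop)]
  simp only [Nat.cast_zero, zero_rpow hk.ne', ENNReal.ofReal_zero, zero_mul, zero_add, hprob,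
    ← lintegral_const_mul' _ _ ENNReal.ofReal_ne_top, Nat.cast_add_one]
  congr 1 with n
  congr 1 with ω
  rw [ENNReal.ofReal_mul (by positivity : (0 : ℝ) ≤ (n + 1 : ℝ) ^ k)]

theorem stmt_1_general {Ω : Type*} {m0 : MeasurableSpace Ω} (P : Measure Ω)
    [IsProbabilityMeasure P] (L : Ω → ℝ) (hL : Measurable L)
    (hLrange : ∀ ω, L ω ∈ Set.Ioc (0:ℝ) 1)
    (X : Ω → ℕ) (hX : Measurable X)
    (hgeo : ∀ n : ℕ, 1 ≤ n →
      (P[(fun ω => if X ω = n then (1:ℝ) else 0) | MeasurableSpace.comap L inferInstance])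
        =ᵐ[P] fun ω => L ω * (1 - L ω) ^ (n - 1))
    (k : ℝ) (hk : 0 < k) :
    (∫⁻ ω, ENNReal.ofReal ((X ω : ℝ) ^ k) ∂P = ⊤) ↔
      (∫⁻ ω, ENNReal.ofReal ((L ω) ^ (-k)) ∂P = ⊤) := by
  rw [lintegral_rpow_eq_lintegral_geomMoment hL hX hgeo hk]
  refine lintegral_eq_top_iff_of_le_of_le (c := ENNReal.ofReal (2 ^ (-k) / 2))
    (C := ENNReal.ofReal (2 * exp 1 * (2 * k / exp 1) ^ k))
    (ENNReal.ofReal_pos.mpr (by positivity)).ne' ENNReal.ofReal_ne_top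
    (fun ω => ?_) (fun ω => ?_)
  · rw [← ENNReal.ofReal_mul (by positivity)]
    exact le_geomMoment hk (hLrange ω).1 (hLrange ω).2
  · rw [← ENNReal.ofReal_mul (by positivity)]
    exact geomMoment_le hk (hLrange ω).1 (hLrange ω).2

/-- Let `L` be a `(0,1]`-valued random variable and `X` a positive-integer
valued random variable whose conditional distribution given `L` is geometric
with success parameter `L`, i.e. `P(X = n | σ(L)) = L(1-L)^{n-1}` a.s. for all
`n ≥ 1`.  Then for any real `k > 0`, `E[X^k] = ∞ ↔ E[L^{-k}] = ∞`. -/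
theorem stmt_1 {Ω : Type*} {m0 : MeasurableSpace Ω} (P : Measure Ω)
    [IsProbabilityMeasure P] (L : Ω → ℝ) (hL : Measurable L)
    (hLrange : ∀ ω, L ω ∈ Set.Ioc (0:ℝ) 1)
    (X : Ω → ℕ) (hX : Measurable X) (hXpos : ∀ ω, 1 ≤ X ω)
    (hgeo : ∀ n : ℕ, 1 ≤ n →
      (P[(fun ω => if X ω = n then (1:ℝ) else 0) | MeasurableSpace.comap L inferInstance])
        =ᵐ[P] fun ω => L ω * (1 - L ω) ^ (n - 1))
    (k : ℝ) (hk : 0 < k) :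
    (∫⁻ ω, ENNReal.ofReal ((X ω : ℝ) ^ k) ∂P = ⊤) ↔
      (∫⁻ ω, ENNReal.ofReal ((L ω) ^ (-k)) ∂P = ⊤) :=
  stmt_1_general (m0 := m0) P L hL hLrange X hX hgeo k hk
end

section
/- Let Z_1, Z_2, ... be nonnegative real-valued random variables, and suppose there exist sigma-algebras F_1, F_2, ... such that the conditional expectations E[Z_n | F_n] converge to 0 in probability. Then Z_n converges to 0 in probability. -/
open MeasureTheory Filter Topology ENNReal

/-!
On the `F`-measurable set `{E[Z | F] < c}` the integrals of `Z` and of `E[Z | F]` agree, so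
the integral of `Z` over it is at most `c`, and Markov's inequality there gives
`P(Z ≥ ε) ≤ P(E[Z | F] ≥ c) + c / ε`.
Letting `n → ∞` and then `c → 0` proves the theorem.
-/

theorem measure_le_le_measure_condExp_add {Ω : Type*} {m m0 : MeasurableSpace Ω}
    {μ : Measure Ω} [IsProbabilityMeasure μ] {f : Ω → ℝ} (hm : m ≤ m0)
    (hf : Integrable f μ) (hf0 : 0 ≤ᵐ[μ] f) {ε c : ℝ} (hε : 0 < ε) (hc : 0 ≤ c) :
    μ {ω | ε ≤ f ω} ≤ μ {ω | c ≤ μ[f | m] ω} + ENNReal.ofReal (c / ε) := by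
  set B := {ω | c ≤ μ[f | m] ω}
  have hB : MeasurableSet[m] B :=
    measurableSet_le measurable_const stronglyMeasurable_condExp.measurable
  have hBc : MeasurableSet Bᶜ := (hm _ hB).compl
  have hint : ∫ ω in Bᶜ, f ω ∂μ ≤ c := calc
    ∫ ω in Bᶜ, f ω ∂μ = ∫ ω in Bᶜ, μ[f | m] ω ∂μ := (setIntegral_condExp hm hf hB.compl).symm
    _ ≤ ∫ _ in Bᶜ, c ∂μ :=
      setIntegral_mono_on integrable_condExp.integrableOn (integrableOn_const (by simp)) hBc
        fun _ hω => le_of_not_ge hω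
    _ = μ.real Bᶜ * c := by rw [setIntegral_const, smul_eq_mul]
    _ ≤ c := mul_le_of_le_one_left hc measureReal_le_one
  have hmarkov : ε * (μ.restrict Bᶜ).real {ω | ε ≤ f ω} ≤ c :=
    (mul_meas_ge_le_integral_of_nonneg (ae_restrict_of_ae hf0) hf.integrableOn ε).trans hint
  calc μ {ω | ε ≤ f ω} ≤ μ ({ω | ε ≤ f ω} ∩ B) + μ ({ω | ε ≤ f ω} \ B) :=
        measure_le_inter_add_sdiff _ _ _
    _ ≤ μ B + μ.restrict Bᶜ {ω | ε ≤ f ω} := by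
        rw [Measure.restrict_apply' hBc]
        exact add_le_add_left (measure_mono Set.inter_subset_right) _
    _ ≤ μ B + ENNReal.ofReal (c / ε) := by
        gcongr
        rw [← ofReal_measureReal]
        exact ENNReal.ofReal_le_ofReal ((le_div_iff₀' hε).2 hmarkov)

theorem tendsto_zero_of_le_add_of_tendsto {ι : Type*} {l : Filter ι} {u : ι → ℝ≥0∞}
    {v : ℝ → ι → ℝ≥0∞} {w : ℝ → ℝ≥0∞} (hv : ∀ c > 0, Tendsto (v c) l (𝓝 0))
    (hw : Tendsto w (𝓝[>] 0) (𝓝 0)) (huvw : ∀ c > 0, ∀ i, u i ≤ v c i + w c) :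
    Tendsto u l (𝓝 0) := by
  refine ENNReal.tendsto_nhds_zero.2 fun δ hδ => ?_
  obtain ⟨c, hwc, hc⟩ := ((hw.eventually (gt_mem_nhds hδ)).and self_mem_nhdsWithin).exists
  filter_upwards [ENNReal.tendsto_nhds_zero.1 (hv c hc) _ (tsub_pos_of_lt hwc)] with i hi
  calc u i ≤ v c i + w c := huvw c hc i
    _ ≤ δ - w c + w c := add_le_add_left hi _
    _ = δ := tsub_add_cancel_of_le hwc.le

theorem stmt_3_general {Ω : Type*} {m0 : MeasurableSpace Ω} (P : Measure Ω)
    [IsProbabilityMeasure P] (Z : ℕ → Ω → ℝ)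
    (hZnonneg : ∀ n ω, 0 ≤ Z n ω)
    (hZint : ∀ n, Integrable (Z n) P)
    (F : ℕ → MeasurableSpace Ω) (hF : ∀ n, F n ≤ m0)
    (hcond : TendstoInMeasure P (fun n => P[Z n | F n]) Filter.atTop 0) :
    TendstoInMeasure P Z Filter.atTop 0 := by
  rw [tendstoInMeasure_iff_dist] at hcond ⊢
  intro ε hε
  have hw : Tendsto (fun c : ℝ => ENNReal.ofReal (c / ε)) (𝓝[>] 0) (𝓝 0) := by
    simpa using ENNReal.tendsto_ofReal
      ((tendsto_id.div_const ε).mono_left (nhdsWithin_le_nhds (a := (0 : ℝ))))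
  refine tendsto_zero_of_le_add_of_tendsto hcond hw fun c hc n => ?_
  calc P {ω | ε ≤ dist (Z n ω) 0} = P {ω | ε ≤ Z n ω} := by
        simp only [Real.dist_eq, sub_zero, abs_of_nonneg (hZnonneg n _)]
    _ ≤ P {ω | c ≤ P[Z n | F n] ω} + ENNReal.ofReal (c / ε) :=
        measure_le_le_measure_condExp_add (hF n) (hZint n) (ae_of_all _ (hZnonneg n)) hε hc.le
    _ ≤ P {ω | c ≤ dist (P[Z n | F n] ω) 0} + ENNReal.ofReal (c / ε) := by
        gcongr with ω
        simpa only [Real.dist_eq, sub_zero] using le_abs_self _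

/-- Let `Z₁, Z₂, ...` be nonnegative integrable random variables and suppose
there exist sub-σ-algebras `F₁, F₂, ...` such that `E[Z_n | F_n] → 0` in
probability.  Then `Z_n → 0` in probability. -/
theorem stmt_3 {Ω : Type*} {m0 : MeasurableSpace Ω} (P : Measure Ω)
    [IsProbabilityMeasure P] (Z : ℕ → Ω → ℝ)
    (hZmeas : ∀ n, Measurable (Z n))
    (hZnonneg : ∀ n ω, 0 ≤ Z n ω)
    (hZint : ∀ n, Integrable (Z n) P)
    (F : ℕ → MeasurableSpace Ω) (hF : ∀ n, F n ≤ m0)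
    (hcond : TendstoInMeasure P (fun n => P[Z n | F n]) Filter.atTop 0) :
    TendstoInMeasure P Z Filter.atTop 0 :=
  stmt_3_general P Z hZnonneg hZint F hF hcond
end

section
/- Let X ~ N(0,1) be a standard normal random variable. Then E[exp(X²/2)] = +∞, while for every N ≥ 2, E[min(exp(X²/2), N)] ≤ sqrt(4·log(N)/π) + 1/sqrt(π·log(N)). -/
/-!
The standard normal density times `exp (x ^ 2 / 2)` is the constant `1 / √(2π)`, so the first
expectation is that constant times the Lebesgue measure of `ℝ`. In the truncated one the
integrand becomes `min (1 / √(2π)) (N · density)`: bound it by `1 / √(2π)` on `|x| ≤ a` and by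
`N · density` beyond, whose mass is controlled by the Gaussian tail bound
`∫_a^∞ exp (-x ^ 2 / 2) ≤ exp (-a ^ 2 / 2) / a`. The cutoff `a = √(2 log N)` makes
`N · exp (-a ^ 2 / 2) = 1`.
-/

open MeasureTheory ProbabilityTheory Real Set Filter Topology

lemma gaussianPDFReal_zero_one (x : ℝ) :
    gaussianPDFReal 0 1 x = (√(2 * π))⁻¹ * exp (-x ^ 2 / 2) := by
  simp [gaussianPDFReal]

lemma gaussianPDFReal_zero_one_mul_exp (x : ℝ) :
    gaussianPDFReal 0 1 x * exp (x ^ 2 / 2) = (√(2 * π))⁻¹ := by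
  rw [gaussianPDFReal_zero_one, mul_assoc, ← exp_add, neg_div, neg_add_cancel, exp_zero, mul_one]

lemma lintegral_exp_sq_div_two_gaussianReal :
    ∫⁻ x, ENNReal.ofReal (exp (x ^ 2 / 2)) ∂gaussianReal 0 1 = ⊤ := by
  have hdensity (x : ℝ) : gaussianPDF 0 1 x * ENNReal.ofReal (exp (x ^ 2 / 2)) =
      ENNReal.ofReal (√(2 * π))⁻¹ := by
    rw [gaussianPDF, ← ENNReal.ofReal_mul (gaussianPDFReal_nonneg 0 1 x),
      gaussianPDFReal_zero_one_mul_exp]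
  rw [gaussianReal_of_var_ne_zero 0 one_ne_zero,
    lintegral_withDensity_eq_lintegral_mul _ (measurable_gaussianPDF 0 1) (by fun_prop)]
  simp only [Pi.mul_apply, hdensity, lintegral_const, Real.volume_univ]
  rw [ENNReal.mul_top (by simp; positivity)]

lemma integrable_exp_neg_sq_div_two : Integrable fun x : ℝ ↦ exp (-x ^ 2 / 2) := by
  simpa [neg_div, div_eq_inv_mul] using integrable_exp_neg_mul_sq one_half_pos

lemma integral_Ioi_exp_neg_sq_div_two_le {a : ℝ} (ha : 0 < a) :
    ∫ x in Ioi a, exp (-x ^ 2 / 2) ≤ exp (-a ^ 2 / 2) / a := by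
  have hmul : Integrable fun x : ℝ ↦ x * exp (-x ^ 2 / 2) := by
    simpa [neg_div, div_eq_inv_mul] using integrable_mul_exp_neg_mul_sq one_half_pos
  have hderiv (x : ℝ) : HasDerivAt (fun y ↦ -exp (-y ^ 2 / 2)) (x * exp (-x ^ 2 / 2)) x :=
    ((((hasDerivAt_pow 2 x).fun_neg).div_const 2).exp).fun_neg.congr_deriv (by push_cast; ring)
  have hlim : Tendsto (fun y : ℝ ↦ -exp (-y ^ 2 / 2)) atTop (𝓝 0) := by
    simpa [neg_div] using (tendsto_exp_neg_atTop_nhds_zero.comp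
      ((tendsto_pow_atTop two_ne_zero).atTop_div_const two_pos)).neg
  have hfirst_moment : ∫ x in Ioi a, x * exp (-x ^ 2 / 2) = exp (-a ^ 2 / 2) := by
    rw [integral_Ioi_of_hasDerivAt_of_tendsto' (fun x _ ↦ hderiv x) hmul.integrableOn hlim]
    ring
  calc ∫ x in Ioi a, exp (-x ^ 2 / 2)
      ≤ ∫ x in Ioi a, a⁻¹ * (x * exp (-x ^ 2 / 2)) := by
        refine setIntegral_mono_on integrable_exp_neg_sq_div_two.integrableOn
          (hmul.const_mul _).integrableOn measurableSet_Ioi fun x hx ↦ ?_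
        rw [← mul_assoc, le_mul_iff_one_le_left (exp_pos _), ← div_eq_inv_mul, one_le_div ha]
        exact le_of_lt hx
    _ = exp (-a ^ 2 / 2) / a := by
        rw [integral_const_mul, hfirst_moment, inv_mul_eq_div]

lemma integral_min_exp_sq_div_two_gaussianReal_le {a M : ℝ} (ha : 0 < a) (hM : 0 ≤ M) :
    ∫ x, min (exp (x ^ 2 / 2)) M ∂gaussianReal 0 1 ≤
      2 * (√(2 * π))⁻¹ * (a + M * exp (-a ^ 2 / 2) / a) := by
  set c := (√(2 * π))⁻¹
  set g : ℝ → ℝ := fun t ↦ min c (M * (c * exp (-t ^ 2 / 2)))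
  have hdensity (x : ℝ) : gaussianPDFReal 0 1 x * min (exp (x ^ 2 / 2)) M = g |x| := by
    rw [mul_min_of_nonneg _ _ (gaussianPDFReal_nonneg 0 1 x), gaussianPDFReal_zero_one_mul_exp,
      gaussianPDFReal_zero_one]
    simp only [g, c, sq_abs]
    ring_nf
  have htail_int : Integrable fun t : ℝ ↦ M * (c * exp (-t ^ 2 / 2)) :=
    (integrable_exp_neg_sq_div_two.const_mul c).const_mul M
  have hg : Integrable g := by
    refine htail_int.mono' (by fun_prop) (ae_of_all _ fun t ↦ ?_)
    rw [Real.norm_of_nonneg (by positivity)]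
    exact min_le_right _ _
  have hbulk : ∫ t in 0..a, g t ≤ a * c :=
    calc ∫ t in 0..a, g t ≤ ∫ _ in 0..a, c :=
          intervalIntegral.integral_mono_on ha.le hg.intervalIntegrable (by simp)
            fun t _ ↦ min_le_left _ _
      _ = a * c := by simp
  have htail : ∫ t in Ioi a, g t ≤ M * (c * (exp (-a ^ 2 / 2) / a)) :=
    calc ∫ t in Ioi a, g t ≤ ∫ t in Ioi a, M * (c * exp (-t ^ 2 / 2)) :=
          setIntegral_mono_on hg.integrableOn htail_int.integrableOn measurableSet_Ioi
            fun t _ ↦ min_le_right _ _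
      _ = M * (c * ∫ t in Ioi a, exp (-t ^ 2 / 2)) := by
          rw [integral_const_mul, integral_const_mul]
      _ ≤ M * (c * (exp (-a ^ 2 / 2) / a)) := by
          gcongr
          exact integral_Ioi_exp_neg_sq_div_two_le ha
  rw [integral_gaussianReal_eq_integral_smul one_ne_zero]
  simp only [smul_eq_mul, hdensity]
  rw [integral_comp_abs,
    ← intervalIntegral.integral_interval_add_Ioi hg.integrableOn hg.integrableOn]
  calc 2 * ((∫ t in 0..a, g t) + ∫ t in Ioi a, g t)
      ≤ 2 * (a * c + M * (c * (exp (-a ^ 2 / 2) / a))) := by gcongr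
    _ = 2 * c * (a + M * exp (-a ^ 2 / 2) / a) := by ring

lemma two_mul_inv_sqrt_two_pi_mul_sqrt_add_inv {L : ℝ} (hL : 0 < L) :
    2 * (√(2 * π))⁻¹ * (√(2 * L) + 1 / √(2 * L)) = √(4 * L / π) + 1 / √(π * L) := by
  have hsqrt : √(4 * L / π) = 2 * √L / √π := by
    rw [sqrt_div' _ pi_pos.le, sqrt_mul' _ hL.le, show (4 : ℝ) = 2 ^ 2 by norm_num,
      sqrt_sq zero_le_two]
  rw [hsqrt, sqrt_mul zero_le_two π, sqrt_mul zero_le_two L, sqrt_mul pi_pos.le L]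
  field_simp
  rw [sq_sqrt zero_le_two]

theorem stmt_4_general {Ω : Type*} [MeasurableSpace Ω] (P : Measure Ω)
    (X : Ω → ℝ) (hX : Measurable X)
    (hlaw : Measure.map X P = gaussianReal 0 1) :
    (∫⁻ ω, ENNReal.ofReal (Real.exp (X ω ^ 2 / 2)) ∂P = ⊤) ∧
    (∀ N : ℕ, 2 ≤ N →
      ∫ ω, min (Real.exp (X ω ^ 2 / 2)) (N : ℝ) ∂P ≤
        Real.sqrt (4 * Real.log N / π) + 1 / Real.sqrt (π * Real.log N)) := by
  have hlawX : HasLaw X (gaussianReal 0 1) P := ⟨hX.aemeasurable, hlaw⟩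
  refine ⟨?_, fun N hN ↦ ?_⟩
  · exact (hlawX.lintegral_comp (f := fun x ↦ ENNReal.ofReal (exp (x ^ 2 / 2)))
      (by fun_prop)).trans lintegral_exp_sq_div_two_gaussianReal
  have hL : 0 < log N := log_pos (by exact_mod_cast hN)
  have hcutoff : (N : ℝ) * exp (-√(2 * log N) ^ 2 / 2) = 1 := by
    rw [sq_sqrt (by positivity), show -(2 * log N) / 2 = -log N by ring, exp_neg,
      exp_log (by positivity), mul_inv_cancel₀ (by positivity)]
  calc ∫ ω, min (exp (X ω ^ 2 / 2)) (N : ℝ) ∂P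
      = ∫ x, min (exp (x ^ 2 / 2)) (N : ℝ) ∂gaussianReal 0 1 :=
        hlawX.integral_comp (f := fun x ↦ min (exp (x ^ 2 / 2)) (N : ℝ)) (by fun_prop)
    _ ≤ 2 * (√(2 * π))⁻¹ * (√(2 * log N) + N * exp (-√(2 * log N) ^ 2 / 2) / √(2 * log N)) :=
        integral_min_exp_sq_div_two_gaussianReal_le (by positivity) N.cast_nonneg
    _ = √(4 * log N / π) + 1 / √(π * log N) := by
        rw [hcutoff, two_mul_inv_sqrt_two_pi_mul_sqrt_add_inv hL]

/-- For `X ~ N(0,1)`: `E[exp(X²/2)] = ∞`, while for every `N ≥ 2`,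
`E[min(exp(X²/2), N)] ≤ √(4·log N/π) + 1/√(π·log N)`. -/
theorem stmt_4 {Ω : Type*} [MeasurableSpace Ω] (P : Measure Ω)
    [IsProbabilityMeasure P] (X : Ω → ℝ) (hX : Measurable X)
    (hlaw : Measure.map X P = gaussianReal 0 1) :
    (∫⁻ ω, ENNReal.ofReal (Real.exp (X ω ^ 2 / 2)) ∂P = ⊤) ∧
    (∀ N : ℕ, 2 ≤ N →
      ∫ ω, min (Real.exp (X ω ^ 2 / 2)) (N : ℝ) ∂P ≤
        Real.sqrt (4 * Real.log N / π) + 1 / Real.sqrt (π * Real.log N)) :=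
  stmt_4_general P X hX hlaw
end

section
/- Let X_1, X_2 be random variables on a measurable space with densities f_1, f_2 with respect to a dominating measure. Suppose that almost surely P(X_2 = X_1 | X_1) ≥ ε·min(1, f_2(X_1)/f_1(X_1)) for some ε > 0. Then almost surely P(X_1 = X_2 | X_2) ≥ ε·min(1, f_1(X_2)/f_2(X_2)). -/
open MeasureTheory Classical

/-! For measurable `B`, transporting to the dominating measure `lam` gives
`∫_{X₂ ∈ B} ε min(1, f₁/f₂)(X₂) dP = ∫_B ε min(f₁, f₂) dlam = ∫_{X₁ ∈ B} ε min(1, f₂/f₁)(X₁) dP`,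
which by hypothesis is at most `∫_{X₁ ∈ B} P(X₁ = X₂ | X₁) dP = P(X₁ ∈ B, X₁ = X₂)`. On the diagonal
`X₁ ∈ B` and `X₂ ∈ B` coincide, so this is also `∫_{X₂ ∈ B} P(X₁ = X₂ | X₂) dP`. Both sides of the
conclusion are `σ(X₂)`-measurable, so comparing their integrals over the sets `{X₂ ∈ B}` suffices. -/

theorem ENNReal.toReal_min_one_div_mul_toReal {a b : ENNReal} (ha : a ≠ ⊤) (hb : b ≠ ⊤) :
    (min 1 (b / a)).toReal * a.toReal = min a.toReal b.toReal := by
  rcases eq_or_ne a 0 with rfl | ha₀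
  · simp
  rw [ENNReal.toReal_min ENNReal.one_ne_top (ENNReal.div_ne_top hb ha₀), ENNReal.toReal_div,
    ENNReal.toReal_one, min_mul_of_nonneg _ _ ENNReal.toReal_nonneg, one_mul,
    div_mul_cancel₀ _ (ENNReal.toReal_ne_zero.mpr ⟨ha₀, ha⟩)]

section

variable {Ω 𝒳 : Type*} {m0 : MeasurableSpace Ω} [MeasurableSpace 𝒳] {μ : Measure Ω}

theorem ae_le_of_forall_setIntegral_le' {m : MeasurableSpace Ω} (hm : m ≤ m0)
    [SigmaFinite (μ.trim hm)] {f g : Ω → ℝ} (hfm : StronglyMeasurable[m] f)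
    (hgm : StronglyMeasurable[m] g) (hf : Integrable f μ) (hg : Integrable g μ)
    (hfg : ∀ s, MeasurableSet[m] s → ∫ ω in s, f ω ∂μ ≤ ∫ ω in s, g ω ∂μ) :
    f ≤ᵐ[μ] g := by
  refine ae_le_of_ae_le_trim (hm := hm) <|
    ae_le_of_forall_setIntegral_le (hf.trim hm hfm) (hg.trim hm hgm) fun s hs _ => ?_
  rw [← setIntegral_trim hm hfm hs, ← setIntegral_trim hm hgm hs]
  exact hfg s hs

theorem integrable_const_mul_toReal_min_one [IsFiniteMeasure μ] (c : ℝ) {r : Ω → ENNReal}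
    (hr : AEMeasurable r μ) : Integrable (fun ω => c * (min 1 (r ω)).toReal) μ := by
  refine .of_bound ((aemeasurable_const.min hr).ennreal_toReal.const_mul c).aestronglyMeasurable
    |c| (ae_of_all _ fun ω => ?_)
  have h₁ : (min 1 (r ω)).toReal ≤ 1 :=
    ENNReal.toReal_le_of_le_ofReal zero_le_one (by simp)
  rw [norm_mul, Real.norm_of_nonneg ENNReal.toReal_nonneg]
  exact mul_le_of_le_one_right (norm_nonneg c) h₁

theorem setIntegral_comp_of_map_eq_withDensity {ν : Measure 𝒳} {X : Ω → 𝒳}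
    (hX : Measurable X) {ρ : 𝒳 → ENNReal} (hρ : Measurable ρ) (hρ_top : ∀ x, ρ x ≠ ⊤)
    (hlaw : μ.map X = ν.withDensity ρ) {g : 𝒳 → ℝ} (hg : Measurable g) {B : Set 𝒳}
    (hB : MeasurableSet B) :
    ∫ ω in X ⁻¹' B, g (X ω) ∂μ = ∫ x in B, (ρ x).toReal * g x ∂ν := by
  rw [← setIntegral_map hB hg.aestronglyMeasurable hX.aemeasurable, hlaw,
    setIntegral_withDensity_eq_setIntegral_toReal_smul hρ
      (ae_of_all _ fun x => (hρ_top x).lt_top) _ hB]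
  rfl

theorem setIntegral_efficiency_bound {ν : Measure 𝒳} {X : Ω → 𝒳} (hX : Measurable X)
    {ρa ρb : 𝒳 → ENNReal} (hρa : Measurable ρa) (hρb : Measurable ρb)
    (hρa_top : ∀ x, ρa x ≠ ⊤) (hρb_top : ∀ x, ρb x ≠ ⊤)
    (hlaw : μ.map X = ν.withDensity ρa) (c : ℝ) {B : Set 𝒳} (hB : MeasurableSet B) :
    ∫ ω in X ⁻¹' B, c * (min 1 (ρb (X ω) / ρa (X ω))).toReal ∂μ
      = ∫ x in B, c * min (ρa x).toReal (ρb x).toReal ∂ν := by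
  rw [setIntegral_comp_of_map_eq_withDensity hX hρa hρa_top hlaw
    (g := fun x => c * (min 1 (ρb x / ρa x)).toReal)
    ((measurable_const.min (hρb.div hρa)).ennreal_toReal.const_mul c) hB]
  refine setIntegral_congr_fun hB fun x _ => ?_
  rw [← ENNReal.toReal_min_one_div_mul_toReal (hρa_top x) (hρb_top x)]
  ring

theorem setIntegral_condExp_indicator_eq_comm [IsFiniteMeasure μ] {X₁ X₂ : Ω → 𝒳}
    (hX₁ : Measurable X₁) (hX₂ : Measurable X₂) {B : Set 𝒳} (hB : MeasurableSet B) :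
    ∫ ω in X₁ ⁻¹' B, μ[fun ω => if X₁ ω = X₂ ω then (1 : ℝ) else 0 |
        MeasurableSpace.comap X₁ inferInstance] ω ∂μ
      = ∫ ω in X₂ ⁻¹' B, μ[fun ω => if X₁ ω = X₂ ω then (1 : ℝ) else 0 |
        MeasurableSpace.comap X₂ inferInstance] ω ∂μ := by
  set ind : Ω → ℝ := fun ω => if X₁ ω = X₂ ω then 1 else 0
  -- `{X₁ = X₂}` need not be measurable; when `ind` is not integrable both sides are `0`.
  by_cases hind : Integrable ind μ
  · rw [setIntegral_condExp hX₁.comap_le hind ⟨B, hB, rfl⟩,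
      setIntegral_condExp hX₂.comap_le hind ⟨B, hB, rfl⟩,
      ← integral_indicator (hX₁ hB), ← integral_indicator (hX₂ hB)]
    congr 1
    ext ω
    by_cases hω : X₁ ω = X₂ ω <;> simp [Set.indicator_apply, ind, hω]
  · simp [condExp_of_not_integrable hind]

end

theorem stmt_10_general {Ω 𝒳 : Type*} {m0 : MeasurableSpace Ω} [MeasurableSpace 𝒳]
    (P : Measure Ω) [IsProbabilityMeasure P]
    (lam : Measure 𝒳)
    (X1 X2 : Ω → 𝒳) (hX1 : Measurable X1) (hX2 : Measurable X2)
    (f1 f2 : 𝒳 → ℝ) (hf1 : Measurable f1) (hf2 : Measurable f2)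
    (hlaw1 : Measure.map X1 P = lam.withDensity (fun x => ENNReal.ofReal (f1 x)))
    (hlaw2 : Measure.map X2 P = lam.withDensity (fun x => ENNReal.ofReal (f2 x)))
    (eps : ℝ)
    (hforward :
      (fun ω => eps *
          (min 1 (ENNReal.ofReal (f2 (X1 ω)) / ENNReal.ofReal (f1 (X1 ω)))).toReal)
        ≤ᵐ[P]
      P[(fun ω => if X1 ω = X2 ω then (1:ℝ) else 0) |
          MeasurableSpace.comap X1 inferInstance]) :
    (fun ω => eps *
        (min 1 (ENNReal.ofReal (f1 (X2 ω)) / ENNReal.ofReal (f2 (X2 ω)))).toReal)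
      ≤ᵐ[P]
    P[(fun ω => if X1 ω = X2 ω then (1:ℝ) else 0) |
        MeasurableSpace.comap X2 inferInstance] := by
  have hρ1 := hf1.ennreal_ofReal
  have hρ2 := hf2.ennreal_ofReal
  have hbound : Measurable fun x =>
      eps * (min 1 (ENNReal.ofReal (f1 x) / ENNReal.ofReal (f2 x))).toReal :=
    (measurable_const.min (hρ1.div hρ2)).ennreal_toReal.const_mul eps
  refine ae_le_of_forall_setIntegral_le' hX2.comap_le
    (hbound.comp (comap_measurable X2)).stronglyMeasurable stronglyMeasurable_condExp
    (integrable_const_mul_toReal_min_one eps ((hρ1.comp hX2).div (hρ2.comp hX2)).aemeasurable)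
    integrable_condExp ?_
  rintro s ⟨B, hB, rfl⟩
  calc _ = ∫ x in B,
          eps * min (ENNReal.ofReal (f2 x)).toReal (ENNReal.ofReal (f1 x)).toReal ∂lam :=
        setIntegral_efficiency_bound hX2 hρ2 hρ1 (by simp) (by simp) hlaw2 eps hB
    _ = ∫ ω in X1 ⁻¹' B,
          eps * (min 1 (ENNReal.ofReal (f2 (X1 ω)) / ENNReal.ofReal (f1 (X1 ω)))).toReal ∂P := by
        simp_rw [min_comm (ENNReal.ofReal (f2 _)).toReal]
        exact (setIntegral_efficiency_bound hX1 hρ1 hρ2 (by simp) (by simp) hlaw1 eps hB).symm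
    _ ≤ ∫ ω in X1 ⁻¹' B, P[fun ω => if X1 ω = X2 ω then (1:ℝ) else 0 |
          MeasurableSpace.comap X1 inferInstance] ω ∂P :=
        setIntegral_mono_ae (integrable_const_mul_toReal_min_one eps
          ((hρ2.comp hX1).div (hρ1.comp hX1)).aemeasurable).integrableOn
          integrable_condExp.integrableOn hforward
    _ = _ := setIntegral_condExp_indicator_eq_comm hX1 hX2 hB

/-- Symmetry of the ε-efficiency condition for a coupling: if `X₁, X₂` have
densities `f₁, f₂` w.r.t. a dominating measure and a.s.
`P(X₂ = X₁ | X₁) ≥ ε·min(1, f₂(X₁)/f₁(X₁))`, then a.s.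
`P(X₁ = X₂ | X₂) ≥ ε·min(1, f₁(X₂)/f₂(X₂))`. -/
theorem stmt_10 {Ω 𝒳 : Type*} {m0 : MeasurableSpace Ω} [MeasurableSpace 𝒳]
    (P : Measure Ω) [IsProbabilityMeasure P]
    (lam : Measure 𝒳) [SigmaFinite lam]
    (X1 X2 : Ω → 𝒳) (hX1 : Measurable X1) (hX2 : Measurable X2)
    (f1 f2 : 𝒳 → ℝ) (hf1 : Measurable f1) (hf2 : Measurable f2)
    (hf1nn : ∀ x, 0 ≤ f1 x) (hf2nn : ∀ x, 0 ≤ f2 x)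
    (hlaw1 : Measure.map X1 P = lam.withDensity (fun x => ENNReal.ofReal (f1 x)))
    (hlaw2 : Measure.map X2 P = lam.withDensity (fun x => ENNReal.ofReal (f2 x)))
    (eps : ℝ) (heps : 0 < eps)
    (hforward :
      (fun ω => eps *
          (min 1 (ENNReal.ofReal (f2 (X1 ω)) / ENNReal.ofReal (f1 (X1 ω)))).toReal)
        ≤ᵐ[P]
      P[(fun ω => if X1 ω = X2 ω then (1:ℝ) else 0) |
          MeasurableSpace.comap X1 inferInstance]) :
    (fun ω => eps *
        (min 1 (ENNReal.ofReal (f1 (X2 ω)) / ENNReal.ofReal (f2 (X2 ω)))).toReal)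
      ≤ᵐ[P]
    P[(fun ω => if X1 ω = X2 ω then (1:ℝ) else 0) |
        MeasurableSpace.comap X2 inferInstance] :=
  stmt_10_general (m0 := m0) P lam X1 X2 hX1 hX2 f1 f2 hf1 hf2 hlaw1 hlaw2 eps hforward
end

section
/- Let a_N, b_N, a*, b* be random variables with b_N and b* nonzero, and suppose √N(a_N − a*) is (C_a, S_a)-sub-Gaussian and √N(b_N − b*) is (C_b, S_b)-sub-Gaussian. Assume ||1/b*||_∞ < ∞ and ||a_N/b_N||_∞ < ∞. Then √N(a_N/b_N − a*/b*) is sub-Gaussian with parameters (C_a + C_b, ||1/b*||_∞·(S_a + S_b·||a_N/b_N||_∞)). -/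
open MeasureTheory

/-- A real random variable `X` is `(C,S)`-sub-Gaussian if
`P(|X|/S > t) ≤ 2C·e^{-t²/2}` for all `t ≥ 0`. -/
def IsSubGaussianWith {Ω : Type*} [MeasurableSpace Ω] (P : Measure Ω)
    (X : Ω → ℝ) (C S : ℝ) : Prop :=
  ∀ t : ℝ, 0 ≤ t →
    (P {ω | t < |X ω| / S}).toReal ≤ 2 * C * Real.exp (-t ^ 2 / 2)

/-- Hoeffding's inequality for ratios: if `√N(a_N − a*)` is `(C_a,S_a)`-sub-
Gaussian and `√N(b_N − b*)` is `(C_b,S_b)`-sub-Gaussian, with `b_N, b* ≠ 0` and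
`‖1/b*‖_∞, ‖a_N/b_N‖_∞ < ∞`, then `√N(a_N/b_N − a*/b*)` is sub-Gaussian with
parameters `(C_a + C_b, ‖1/b*‖_∞·(S_a + S_b‖a_N/b_N‖_∞))`. -/
theorem stmt_14 {Ω : Type*} [MeasurableSpace Ω] (P : Measure Ω)
    [IsProbabilityMeasure P] (N : ℕ) (hN : 0 < N)
    (aN bN astar bstar : Ω → ℝ)
    (hbN : ∀ ω, bN ω ≠ 0) (hbstar : ∀ ω, bstar ω ≠ 0)
    (Ca Cb Sa Sb : ℝ) (hCa : 0 ≤ Ca) (hCb : 0 ≤ Cb) (hSa : 0 < Sa) (hSb : 0 < Sb)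
    (ha : IsSubGaussianWith P (fun ω => Real.sqrt N * (aN ω - astar ω)) Ca Sa)
    (hb : IsSubGaussianWith P (fun ω => Real.sqrt N * (bN ω - bstar ω)) Cb Sb)
    (hbinv : essSup (fun ω => (‖(bstar ω)⁻¹‖₊ : ENNReal)) P ≠ ⊤)
    (hratio : essSup (fun ω => (‖aN ω / bN ω‖₊ : ENNReal)) P ≠ ⊤) :
    IsSubGaussianWith P (fun ω => Real.sqrt N * (aN ω / bN ω - astar ω / bstar ω))
      (Ca + Cb)
      ((essSup (fun ω => (‖(bstar ω)⁻¹‖₊ : ENNReal)) P).toReal *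
        (Sa + Sb * (essSup (fun ω => (‖aN ω / bN ω‖₊ : ENNReal)) P).toReal)) := by
  set M1 := (essSup (fun ω => (‖(bstar ω)⁻¹‖₊ : ENNReal)) P).toReal with hM1def
  set M2 := (essSup (fun ω => (‖aN ω / bN ω‖₊ : ENNReal)) P).toReal with hM2def
  have h1 : ∀ᵐ ω ∂P, |(bstar ω)⁻¹| ≤ M1 := by
    filter_upwards [ae_le_essSup (f := fun ω => (‖(bstar ω)⁻¹‖₊ : ENNReal))] with ω hω
    have := ENNReal.toReal_mono hbinv hω
    simpa only [ENNReal.coe_toReal, coe_nnnorm, Real.norm_eq_abs, ← hM1def] using this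
  have h2 : ∀ᵐ ω ∂P, |aN ω / bN ω| ≤ M2 := by
    filter_upwards [ae_le_essSup (f := fun ω => (‖aN ω / bN ω‖₊ : ENNReal))] with ω hω
    have := ENNReal.toReal_mono hratio hω
    simpa only [ENNReal.coe_toReal, coe_nnnorm, Real.norm_eq_abs, ← hM2def] using this
  have hM2nonneg : 0 ≤ M2 := ENNReal.toReal_nonneg
  have hM1pos : 0 < M1 := by
    rw [hM1def]
    apply ENNReal.toReal_pos _ hbinv
    intro h0
    have := ae_le_essSup (f := fun ω => (‖(bstar ω)⁻¹‖₊ : ENNReal)) (μ := P)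
    rw [h0] at this
    have : ∀ᵐ ω ∂P, (bstar ω)⁻¹ = 0 := by
      filter_upwards [this] with ω hω
      simpa using hω
    have h2 : ∀ᵐ ω ∂P, False := by
      filter_upwards [this] with ω hω
      exact hbstar ω (inv_eq_zero.mp hω)
    exact (IsProbabilityMeasure.ne_zero P) (by simpa using h2)
  have hSpos : 0 < M1 * (Sa + Sb * M2) := by positivity
  intro t ht
  set A : Set Ω := {ω | t < |Real.sqrt N * (aN ω - astar ω)| / Sa} with hA
  set B : Set Ω := {ω | t < |Real.sqrt N * (bN ω - bstar ω)| / Sb} with hB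
  have key : ({ω | t < |Real.sqrt N * (aN ω / bN ω - astar ω / bstar ω)| / (M1 * (Sa + Sb * M2))} : Set Ω)
      ≤ᵐ[P] (A ∪ B : Set Ω) := by
    filter_upwards [h1, h2] with ω hω1 hω2 hmem
    by_contra hc
    have hca' : ω ∉ A := fun h => hc (Set.mem_union_left _ h)
    have hcb' : ω ∉ B := fun h => hc (Set.mem_union_right _ h)
    simp only [hA, Set.mem_setOf_eq, not_lt] at hca'
    simp only [hB, Set.mem_setOf_eq, not_lt] at hcb'
    have hca := hca'
    have hcb := hcb'
    have hXa : |Real.sqrt N * (aN ω - astar ω)| ≤ Sa * t := by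
      rw [div_le_iff₀ hSa] at hca; linarith [hca]
    have hXb : |Real.sqrt N * (bN ω - bstar ω)| ≤ Sb * t := by
      rw [div_le_iff₀ hSb] at hcb; linarith [hcb]
    have heq : Real.sqrt N * (aN ω / bN ω - astar ω / bstar ω)
        = (aN ω / bN ω) * (bstar ω)⁻¹ * (-(Real.sqrt N * (bN ω - bstar ω)))
          + (bstar ω)⁻¹ * (Real.sqrt N * (aN ω - astar ω)) := by
      have h01 := hbN ω
      have h02 := hbstar ω
      field_simp
      ring
    have hbound : |Real.sqrt N * (aN ω / bN ω - astar ω / bstar ω)|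
        ≤ M2 * M1 * (Sb * t) + M1 * (Sa * t) := by
      rw [heq]
      calc |(aN ω / bN ω) * (bstar ω)⁻¹ * (-(Real.sqrt N * (bN ω - bstar ω)))
            + (bstar ω)⁻¹ * (Real.sqrt N * (aN ω - astar ω))|
          ≤ |(aN ω / bN ω) * (bstar ω)⁻¹ * (-(Real.sqrt N * (bN ω - bstar ω)))|
            + |(bstar ω)⁻¹ * (Real.sqrt N * (aN ω - astar ω))| := abs_add_le _ _
        _ ≤ M2 * M1 * (Sb * t) + M1 * (Sa * t) := by
            rw [abs_mul, abs_mul, abs_mul, abs_neg]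
            have h0a : (0:ℝ) ≤ |(aN ω / bN ω)| := abs_nonneg _
            have h0b : (0:ℝ) ≤ |(bstar ω)⁻¹| := abs_nonneg _
            have h0c : (0:ℝ) ≤ |Real.sqrt N * (bN ω - bstar ω)| := abs_nonneg _
            have h0d : (0:ℝ) ≤ |Real.sqrt N * (aN ω - astar ω)| := abs_nonneg _
            have A1 : |aN ω / bN ω| * |(bstar ω)⁻¹| ≤ M2 * M1 :=
              mul_le_mul hω2 hω1 h0b hM2nonneg
            have A2 : |aN ω / bN ω| * |(bstar ω)⁻¹| * |Real.sqrt N * (bN ω - bstar ω)|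
                ≤ M2 * M1 * (Sb * t) :=
              mul_le_mul A1 hXb h0c (by positivity)
            have A3 : |(bstar ω)⁻¹| * |Real.sqrt N * (aN ω - astar ω)| ≤ M1 * (Sa * t) :=
              mul_le_mul hω1 hXa h0d hM1pos.le
            exact add_le_add A2 A3
    have : |Real.sqrt N * (aN ω / bN ω - astar ω / bstar ω)| / (M1 * (Sa + Sb * M2)) ≤ t := by
      rw [div_le_iff₀ hSpos]
      nlinarith
    have hmem' : t < |Real.sqrt N * (aN ω / bN ω - astar ω / bstar ω)| / (M1 * (Sa + Sb * M2)) := hmem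
    linarith
  calc (P {ω | t < |Real.sqrt N * (aN ω / bN ω - astar ω / bstar ω)| / (M1 * (Sa + Sb * M2))}).toReal
      ≤ (P (A ∪ B)).toReal :=
        ENNReal.toReal_mono (measure_ne_top P _) (measure_mono_ae key)
    _ ≤ (P A).toReal + (P B).toReal := by
        rw [← ENNReal.toReal_add (measure_ne_top P A) (measure_ne_top P B)]
        exact ENNReal.toReal_mono (by finiteness) (measure_union_le A B)
    _ ≤ 2 * Ca * Real.exp (-t ^ 2 / 2) + 2 * Cb * Real.exp (-t ^ 2 / 2) :=
        add_le_add (ha t ht) (hb t ht)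
    _ = 2 * (Ca + Cb) * Real.exp (-t ^ 2 / 2) := by ring
end

section
/- Let S_A and S_B be subsets of ℝ^d with finite positive Lebesgue measure, let S_0 = S_A ∩ S_B, and let A ~ Uniform(S_A), B ~ Uniform(S_B) be (possibly dependent) random variables. Let C ~ Uniform(S_A) be independent of (A, B). Define A* = C if both A ∈ S_0 and C ∈ S_0, and A* = A otherwise; similarly define B* = C if both B ∈ S_0 and C ∈ S_0, and B* = B otherwise. Then A* ~ Uniform(S_A) and B* ~ Uniform(S_B). -/
open MeasureTheory ProbabilityTheory Classical

/-- The uniform distribution on a set `S` of finite positive Lebesgue measure. -/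
noncomputable def unifOn {d : ℕ} (S : Set (Fin d → ℝ)) : Measure (Fin d → ℝ) :=
  (volume S)⁻¹ • volume.restrict S

lemma swap_key {Ω α : Type*} [MeasurableSpace Ω] [MeasurableSpace α]
    (P : Measure Ω) [IsProbabilityMeasure P]
    (S1 S2 : Set α) (hS0 : MeasurableSet (S1 ∩ S2))
    (X C : Ω → α) (hX : Measurable X) (hC : Measurable C)
    (hindep : IndepFun C X P)
    (hswap : ∀ E : Set α, MeasurableSet E →
      P (X ⁻¹' (S1 ∩ S2)) * P (C ⁻¹' (S1 ∩ S2 ∩ E)) = P (C ⁻¹' (S1 ∩ S2)) * P (X ⁻¹' (S1 ∩ S2 ∩ E))) :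
    Measure.map (fun ω => if X ω ∈ S1 ∩ S2 ∧ C ω ∈ S1 ∩ S2 then C ω else X ω) P
      = Measure.map X P := by
  set S0 := S1 ∩ S2 with hS0def
  have hmeas : Measurable (fun ω => if X ω ∈ S0 ∧ C ω ∈ S0 then C ω else X ω) := by
    refine Measurable.ite ?_ hC hX
    exact (hX hS0).inter (hC hS0)
  ext E hE
  rw [Measure.map_apply hmeas hE, Measure.map_apply hX hE]
  set G : Set Ω := X ⁻¹' S0 ∩ C ⁻¹' S0 with hG
  have hGm : MeasurableSet G := (hX hS0).inter (hC hS0)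
  have hpre : (fun ω => if X ω ∈ S0 ∧ C ω ∈ S0 then C ω else X ω) ⁻¹' E
      = (G ∩ C ⁻¹' E) ∪ (X ⁻¹' E \ G) := by
    ext ω
    by_cases h : X ω ∈ S0 ∧ C ω ∈ S0 <;>
      simp [hG, Set.mem_preimage, Set.mem_inter_iff, h]
  have hdisj : Disjoint (G ∩ C ⁻¹' E) (X ⁻¹' E \ G) :=
    Set.disjoint_of_subset Set.inter_subset_left (Set.diff_subset_compl _ _)
      disjoint_compl_right
  rw [hpre, measure_union hdisj ((hX hE).diff hGm)]
  have h1 : G ∩ C ⁻¹' E = X ⁻¹' S0 ∩ C ⁻¹' (S0 ∩ E) := by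
    ext ω; simp only [hG, hS0def, Set.mem_inter_iff, Set.mem_preimage]; tauto
  have h2 : X ⁻¹' E ∩ G = C ⁻¹' S0 ∩ X ⁻¹' (S0 ∩ E) := by
    ext ω; simp only [hG, hS0def, Set.mem_inter_iff, Set.mem_preimage]; tauto
  have hPC : P (G ∩ C ⁻¹' E) = P (X ⁻¹' E ∩ G) := by
    rw [h1, h2, Set.inter_comm (X ⁻¹' S0),
      hindep.measure_inter_preimage_eq_mul _ _ (hS0.inter hE) hS0,
      hindep.measure_inter_preimage_eq_mul _ _ hS0 (hS0.inter hE)]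
    rw [mul_comm (P (C ⁻¹' (S0 ∩ E)))]
    exact hswap E hE
  rw [hPC, measure_inter_add_diff _ hGm]

/-- Let `S_A, S_B ⊆ ℝ^d` have finite positive Lebesgue measure,
`S₀ = S_A ∩ S_B`, `A ~ Uniform(S_A)`, `B ~ Uniform(S_B)` (possibly dependent)
and `C ~ Uniform(S_A)` independent of `(A,B)`.  Define `A* = C` if `A ∈ S₀`
and `C ∈ S₀`, else `A* = A`; and `B* = C` if `B ∈ S₀` and `C ∈ S₀`, else
`B* = B`.  Then `A* ~ Uniform(S_A)` and `B* ~ Uniform(S_B)`. -/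
theorem stmt_16 {Ω : Type*} [MeasurableSpace Ω] (P : Measure Ω)
    [IsProbabilityMeasure P] (d : ℕ) (SA SB : Set (Fin d → ℝ))
    (hSA : MeasurableSet SA) (hSB : MeasurableSet SB)
    (hSA0 : 0 < volume SA) (hSAfin : volume SA < ⊤)
    (hSB0 : 0 < volume SB) (hSBfin : volume SB < ⊤)
    (A B C : Ω → (Fin d → ℝ))
    (hA : Measurable A) (hB : Measurable B) (hC : Measurable C)
    (hlawA : Measure.map A P = unifOn SA)
    (hlawB : Measure.map B P = unifOn SB)
    (hlawC : Measure.map C P = unifOn SA)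
    (hindep : IndepFun C (fun ω => (A ω, B ω)) P) :
    Measure.map (fun ω =>
        if A ω ∈ SA ∩ SB ∧ C ω ∈ SA ∩ SB then C ω else A ω) P = unifOn SA ∧
    Measure.map (fun ω =>
        if B ω ∈ SA ∩ SB ∧ C ω ∈ SA ∩ SB then C ω else B ω) P = unifOn SB := by
  have hS0 : MeasurableSet (SA ∩ SB) := hSA.inter hSB
  have hindepA : IndepFun C A P := hindep.comp measurable_id measurable_fst
  have hindepB : IndepFun C B P := hindep.comp measurable_id measurable_snd
  have hPA : ∀ T : Set (Fin d → ℝ), MeasurableSet T → P (A ⁻¹' T) = unifOn SA T := by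
    intro T hT; rw [← hlawA, Measure.map_apply hA hT]
  have hPB : ∀ T : Set (Fin d → ℝ), MeasurableSet T → P (B ⁻¹' T) = unifOn SB T := by
    intro T hT; rw [← hlawB, Measure.map_apply hB hT]
  have hPC : ∀ T : Set (Fin d → ℝ), MeasurableSet T → P (C ⁻¹' T) = unifOn SA T := by
    intro T hT; rw [← hlawC, Measure.map_apply hC hT]
  have hunif : ∀ (S : Set (Fin d → ℝ)) (T : Set (Fin d → ℝ)), MeasurableSet T →
      unifOn S T = (volume S)⁻¹ * volume (T ∩ S) := by
    intro S T hT
    rw [unifOn, Measure.smul_apply, Measure.restrict_apply hT, smul_eq_mul]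
  constructor
  · refine (swap_key P SA SB hS0 A C hA hC hindepA ?_).trans hlawA
    intro E hE
    rw [hPA _ hS0, hPC _ (hS0.inter hE), hPC _ hS0, hPA _ (hS0.inter hE)]
  · refine (swap_key P SA SB hS0 B C hB hC hindepB ?_).trans hlawB
    intro E hE
    rw [hPB _ hS0, hPC _ (hS0.inter hE), hPC _ hS0, hPB _ (hS0.inter hE)]
    rw [hunif SB _ hS0, hunif SA _ (hS0.inter hE), hunif SA _ hS0,
      hunif SB _ (hS0.inter hE)]
    have e1 : SA ∩ SB ∩ SB = SA ∩ SB := by exact Set.inter_eq_left.mpr Set.inter_subset_right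
    have e2 : SA ∩ SB ∩ SA = SA ∩ SB := by exact Set.inter_eq_left.mpr Set.inter_subset_left
    have e3 : SA ∩ SB ∩ E ∩ SA = SA ∩ SB ∩ E := by
      ext x; simp [Set.mem_inter_iff]; tauto
    have e4 : SA ∩ SB ∩ E ∩ SB = SA ∩ SB ∩ E := by
      ext x; simp [Set.mem_inter_iff]; tauto
    rw [e1, e2, e3, e4]; ring
end
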